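/- Let t, K : ℕ → ℕ be sequences with K(N) ≥ 2 for all N, such that t(N)·log₂(N)/N → 0 and log₂(K(N))/N → 0 as N → ∞. Then there exists N₀ such that for every N ≥ N₀ there exist nonzero vectors α^{(0)},…,α^{(K(N)−1)} ∈ ℝ^{S_{N,N}} with nonnegative entries and pairwise disjoint supports satisfying conditions (C1)–(C4) with parameter t(N); consequently, for every K = o(2^N) and d = o(N/log N) there exist families of (N, K, N, d) permutation-invariant, Fock state, and spin codes. -/

import Mathlib

/-- The discrete simplex `S_{q,N}`: tuples of naturals of length `q` summing to `N`. -/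
def simplex (q N : ℕ) : Finset (Fin q → ℕ) := Finset.Nat.antidiagonalTuple q N

/-- Multinomial coefficient `C(∑ n; n)` for a tuple of naturals. -/
def multinat {q : ℕ} (n : Fin q → ℕ) : ℕ := Nat.multinomial Finset.univ n

/-- Multinomial coefficient for an integer tuple: `0` if some entry is negative. -/
def multZ {q : ℕ} (n : Fin q → ℤ) : ℕ :=
  if ∀ i, 0 ≤ n i then Nat.multinomial Finset.univ (fun i => (n i).toNat) else 0

/-- The coefficient `C(N−t; n−e) / √(C(N;n)·C(N; n−e+f))` appearing in the error-correction
conditions; it vanishes when `n − e` has a negative entry. -/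
noncomputable def klCoeff {q : ℕ} (n e f : Fin q → ℕ) : ℝ :=
  (multZ (fun i => (n i : ℤ) - (e i : ℤ)) : ℝ) /
    Real.sqrt ((multinat n : ℝ) * (multinat (fun i => n i - e i + f i) : ℝ))

/-- Condition (C1) for real coefficient vectors: pairwise orthogonality. -/
def condR1 (q K N : ℕ) (α : Fin K → (Fin q → ℕ) → ℝ) : Prop :=
  ∀ i j : Fin K, i ≠ j → ∑ n ∈ simplex q N, α i n * α j n = 0

/-- Condition (C2) for real coefficient vectors: equal norms. -/
def condR2 (q K N : ℕ) (α : Fin K → (Fin q → ℕ) → ℝ) : Prop :=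
  ∀ i j : Fin K, ∑ n ∈ simplex q N, (α i n) ^ 2 = ∑ n ∈ simplex q N, (α j n) ^ 2

/-- Condition (C3) for real coefficient vectors: Knill–Laflamme orthogonality. -/
def condR3 (q K N t : ℕ) (α : Fin K → (Fin q → ℕ) → ℝ) : Prop :=
  ∀ i j : Fin K, i ≠ j → ∀ e ∈ simplex q t, ∀ f ∈ simplex q t,
    ∑ n ∈ simplex q N, α i n * α j (fun k => n k - e k + f k) * klCoeff n e f = 0

/-- Condition (C4) for real coefficient vectors: Knill–Laflamme non-deformation. -/
def condR4 (q K N t : ℕ) (α : Fin K → (Fin q → ℕ) → ℝ) : Prop :=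
  ∀ i j : Fin K, i ≠ j → ∀ e ∈ simplex q t, ∀ f ∈ simplex q t,
    ∑ n ∈ simplex q N,
      (α i n * α i (fun k => n k - e k + f k) - α j n * α j (fun k => n k - e k + f k)) *
        klCoeff n e f = 0


section AuxForStatement18
set_option linter.unusedSectionVars false
set_option linter.unusedVariables false
set_option maxHeartbeats 1000000
open Finset Polynomial
open scoped Nat

section Poly

variable {F : Type*} [Field F] [Fintype F] [DecidableEq F]

/-- evaluation of a coefficient vector at a point -/
def pev {k : ℕ} (d : Fin k → F) (x : F) : F := ∑ r : Fin k, d r * x ^ (r : ℕ)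

lemma pev_add {k : ℕ} (d d' : Fin k → F) (x : F) :
    pev (d + d') x = pev d x + pev d' x := by
  simp [pev, add_mul, Finset.sum_add_distrib]

lemma pev_sub {k : ℕ} (d d' : Fin k → F) (x : F) :
    pev (d - d') x = pev d x - pev d' x := by
  simp [pev, sub_mul, Finset.sum_sub_distrib]

/-- the polynomial with coefficient vector `d` -/
noncomputable def pcoef {k : ℕ} (d : Fin k → F) : F[X] :=
  ∑ r : Fin k, Polynomial.monomial (r : ℕ) (d r)

lemma pcoef_eval {k : ℕ} (d : Fin k → F) (x : F) : (pcoef d).eval x = pev d x := by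
  simp [pcoef, pev, Polynomial.eval_finset_sum]

lemma pcoef_coeff {k : ℕ} (d : Fin k → F) (s : Fin k) : (pcoef d).coeff (s : ℕ) = d s := by
  classical
  rw [pcoef, Polynomial.finset_sum_coeff]
  rw [Finset.sum_eq_single s]
  · simp
  · intro b _ hb
    rw [Polynomial.coeff_monomial, if_neg]
    intro h
    exact hb (Fin.ext h.symm ▸ rfl)
  · simp

lemma pcoef_natDegree_lt {k : ℕ} (hk : 1 ≤ k) (d : Fin k → F) : (pcoef d).natDegree < k := by
  have : (pcoef d).degree < (k : WithBot ℕ) := by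
    apply lt_of_le_of_lt (Polynomial.degree_sum_le _ _)
    rw [Finset.sup_lt_iff (by exact_mod_cast WithBot.bot_lt_coe k)]
    intro r _
    exact lt_of_le_of_lt (Polynomial.degree_monomial_le _ _) (by exact_mod_cast r.2)
  rcases eq_or_ne (pcoef d) 0 with h | h
  · simpa [h] using (show 0 < k by omega)
  · exact (Polynomial.natDegree_lt_iff_degree_lt h).2 this

/-- a nonzero polynomial of degree `< k` vanishes at fewer than `k` of the
injectively-indexed points `pts`. -/
lemma pev_vanish_card {k n : ℕ} (hk : 1 ≤ k) (d : Fin k → F) (hd : d ≠ 0)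
    (pts : Fin n → F) (hpts : Function.Injective pts) :
    ((univ : Finset (Fin n)).filter (fun j => pev d (pts j) = 0)).card ≤ k - 1 := by
  classical
  have hP : pcoef d ≠ 0 := by
    intro h
    apply hd
    funext s
    have := pcoef_coeff d s
    rw [h] at this
    simpa using this.symm
  have hsub : ((univ : Finset (Fin n)).filter (fun j => pev d (pts j) = 0)).image pts
      ⊆ (pcoef d).roots.toFinset := by
    intro x hx
    rcases Finset.mem_image.1 hx with ⟨j, hj, rfl⟩
    rw [Multiset.mem_toFinset, Polynomial.mem_roots hP]
    have := (Finset.mem_filter.1 hj).2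
    rw [Polynomial.IsRoot, pcoef_eval]
    exact this
  calc ((univ : Finset (Fin n)).filter (fun j => pev d (pts j) = 0)).card
      = (((univ : Finset (Fin n)).filter (fun j => pev d (pts j) = 0)).image pts).card :=
        (Finset.card_image_of_injective _ hpts).symm
    _ ≤ (pcoef d).roots.toFinset.card := Finset.card_le_card hsub
    _ ≤ Multiset.card (pcoef d).roots := Multiset.toFinset_card_le _
    _ ≤ (pcoef d).natDegree := Polynomial.card_roots' _
    _ ≤ k - 1 := by have := pcoef_natDegree_lt hk d; omega

/-- interpolation: any values on at most `k` points can be matched by a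
coefficient vector of length `k`. -/
lemma pev_interp {k n : ℕ} (hk : 1 ≤ k) (pts : Fin n → F) (hpts : Function.Injective pts)
    (J : Finset (Fin n)) (hJ : J.card ≤ k) (dvals : Fin n → F) :
    ∃ δ : Fin k → F, ∀ j ∈ J, pev δ (pts j) = dvals j := by
  classical
  set P := Lagrange.interpolate J pts dvals with hPdef
  have hdeg : P.natDegree < k := by
    have hdeg' : P.degree < (J.card : WithBot ℕ) := Lagrange.degree_interpolate_lt _ (hpts.injOn)
    rcases eq_or_ne P 0 with h | h
    · rw [h]
      simpa using (show 0 < k by omega)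
    · exact (Polynomial.natDegree_lt_iff_degree_lt h).2
        (lt_of_lt_of_le hdeg' (by exact_mod_cast hJ))
  refine ⟨fun r => P.coeff r, fun j hj => ?_⟩
  have : P.eval (pts j) = dvals j := Lagrange.eval_interpolate_at_node _ (hpts.injOn) hj
  rw [← this, Polynomial.eval_eq_sum_range' hdeg]
  rw [pev, Finset.sum_range fun i => P.coeff i * (pts j) ^ i]

end Poly




section Code
variable {p : ℕ} [Fact p.Prime] {t m : ℕ}

/-- evaluation points -/
def pts (ns : ℕ) (j : Fin ns) : ZMod p := (j : ZMod p)

lemma pts_inj {ns : ℕ} (h : ns ≤ p) : Function.Injective (pts (p := p) ns) := by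
  haveI : NeZero p := ⟨(Fact.out : p.Prime).ne_zero⟩
  intro a b hab
  have ha := ZMod.val_cast_of_lt (lt_of_lt_of_le a.2 h)
  have hb := ZMod.val_cast_of_lt (lt_of_lt_of_le b.2 h)
  apply Fin.ext
  rw [← ha, ← hb]
  simpa [pts] using congrArg ZMod.val hab

/-- assemble low and high coefficients -/
def coefv (c : Fin (t+1) → ZMod p) (h : Fin m → ZMod p) : Fin (t+1+m) → ZMod p :=
  fun r => if hr : (r : ℕ) < t+1 then c ⟨r, hr⟩ else h ⟨(r : ℕ) - (t+1), by omega⟩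

lemma coefv_inj {c c' : Fin (t+1) → ZMod p} {h h' : Fin m → ZMod p}
    (H : coefv c h = coefv c' h') : c = c' ∧ h = h' := by
  constructor
  · funext s
    have := congrFun H ⟨(s : ℕ), by omega⟩
    simpa [coefv, s.2] using this
  · funext s
    have := congrFun H ⟨t+1+(s : ℕ), by omega⟩
    simpa [coefv, show ¬ (t+1+(s:ℕ) ≤ t) by omega] using this

lemma coefv_sub (c c' : Fin (t+1) → ZMod p) (h h' : Fin m → ZMod p) :
    coefv c h - coefv c' h' = coefv (c - c') (h - h') := by
  funext r
  by_cases hr : (r : ℕ) < t+1 <;> simp [coefv, hr]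

/-- high part evaluation -/
def hipev (t : ℕ) (h : Fin m → ZMod p) (x : ZMod p) : ZMod p :=
  ∑ i : Fin m, h i * x ^ (t+1+(i:ℕ))

lemma pev_coefv (c : Fin (t+1) → ZMod p) (h : Fin m → ZMod p) (x : ZMod p) :
    pev (coefv c h) x = pev c x + hipev t h x := by
  rw [pev, Fin.sum_univ_add (f := fun r : Fin ((t+1)+m) => coefv c h r * x ^ (r : ℕ))]
  congr 1
  · apply Finset.sum_congr rfl
    intro i _
    simp [coefv]
    intro h1; exact absurd i.2 (by omega)
  · apply Finset.sum_congr rfl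
    intro i _
    simp [coefv, hipev]
    intro h1; exact absurd h1 (by omega)

/-- codeword -/
def cw (c : Fin (t+1) → ZMod p) (h : Fin m → ZMod p) (j : Fin (2*t+2+m)) : ZMod p :=
  pev (coefv c h) (pts (2*t+2+m) j)

lemma cw_dist (hp : 2*t+2+m ≤ p) {c c' : Fin (t+1) → ZMod p} {h h' : Fin m → ZMod p}
    (hne : ¬(c = c' ∧ h = h')) :
    t+2 ≤ ((univ : Finset (Fin (2*t+2+m))).filter (fun j => cw c h j ≠ cw c' h' j)).card := by
  classical
  have hd : coefv c h - coefv c' h' ≠ 0 := by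
    intro h0
    exact hne (coefv_inj (sub_eq_zero.1 (by rw [h0]) : coefv c h = coefv c' h'))
  have hv := pev_vanish_card (k := t+1+m) (by omega) _ hd (pts (p := p) (2*t+2+m))
      (pts_inj (by omega))
  have heq : (univ : Finset (Fin (2*t+2+m))).filter (fun j => cw c h j = cw c' h' j)
      = (univ : Finset (Fin (2*t+2+m))).filter
          (fun j => pev (coefv c h - coefv c' h') (pts (2*t+2+m) j) = 0) := by
    apply Finset.filter_congr
    intro j _
    rw [pev_sub, sub_eq_zero]
    exact Iff.rfl
  have hcard : (univ : Finset (Fin (2*t+2+m))).card = 2*t+2+m := by simp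
  have h2 : (univ : Finset (Fin (2*t+2+m))).filter (fun j => cw c h j ≠ cw c' h' j)
      = univ \ ((univ : Finset (Fin (2*t+2+m))).filter (fun j => cw c h j = cw c' h' j)) :=
    Finset.filter_not _ _
  rw [h2, Finset.card_sdiff_of_subset (Finset.filter_subset _ _), hcard, heq]
  omega

/-- translation invariance of pattern counts -/
lemma count_translate {ns : ℕ} (hns : ns ≤ p) (hk : 1 ≤ t+1)
    (J : Finset (Fin ns)) (hJ : J.card ≤ t)
    (OK : Fin ns → Finset (ZMod p)) (w w' : Fin ns → ZMod p) :
    ((univ : Finset (Fin (t+1) → ZMod p)).filter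
        (fun c => ∀ j ∈ J, (pev c (pts ns j) + w j) ∈ OK j)).card =
    ((univ : Finset (Fin (t+1) → ZMod p)).filter
        (fun c => ∀ j ∈ J, (pev c (pts ns j) + w' j) ∈ OK j)).card := by
  classical
  obtain ⟨δ, hδ⟩ := pev_interp (k := t+1) hk (pts (p := p) ns) (pts_inj hns) J
    (le_trans hJ (Nat.le_succ t)) (fun j => w j - w' j)
  apply Finset.card_bij' (i := fun c _ => c + δ) (j := fun c _ => c - δ)
  · intro c hc
    rw [Finset.mem_filter] at hc ⊢
    refine ⟨Finset.mem_univ _, fun j hj => ?_⟩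
    have heq2 : pev (c + δ) (pts ns j) + w' j = pev c (pts ns j) + w j := by
      rw [pev_add, hδ j hj]; ring
    rw [heq2]
    exact hc.2 j hj
  · intro c hc
    rw [Finset.mem_filter] at hc ⊢
    refine ⟨Finset.mem_univ _, fun j hj => ?_⟩
    have heq2 : pev (c - δ) (pts ns j) + w j = pev c (pts ns j) + w' j := by
      rw [pev_sub, hδ j hj]; ring
    rw [heq2]
    exact hc.2 j hj
  · intro c _; simp
  · intro c _; simp

end Code


section Emb
variable {p : ℕ} [Fact p.Prime]

/-- the `l`-th binary digit of a residue, as a natural number -/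
def bitv (y : ZMod p) (l : ℕ) : ℕ := if y.val.testBit l then 1 else 0

lemma bitv_le_one (y : ZMod p) (l : ℕ) : bitv y l ≤ 1 := by
  unfold bitv; split <;> omega

lemma eq_of_bitv {L : ℕ} (hpL : p ≤ 2^L) {y y' : ZMod p}
    (h : ∀ l < L, bitv y l = bitv y' l) : y = y' := by
  haveI : NeZero p := ⟨(Fact.out : p.Prime).ne_zero⟩
  apply ZMod.val_injective
  apply Nat.eq_of_testBit_eq
  intro i
  by_cases hi : i < L
  · have := h i hi
    unfold bitv at this
    rcases Bool.eq_false_or_eq_true (y.val.testBit i) with hb | hb <;>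
      rcases Bool.eq_false_or_eq_true (y'.val.testBit i) with hb' | hb' <;>
      simp [hb, hb'] at this ⊢
  · have hy : y.val < 2 ^ i := lt_of_lt_of_le (lt_of_lt_of_le (ZMod.val_lt y) hpL)
      (Nat.pow_le_pow_right (by norm_num) (by omega))
    have hy' : y'.val < 2 ^ i := lt_of_lt_of_le (lt_of_lt_of_le (ZMod.val_lt y') hpL)
      (Nat.pow_le_pow_right (by norm_num) (by omega))
    rw [Nat.testBit_eq_false_of_lt hy, Nat.testBit_eq_false_of_lt hy']

variable (N t m L : ℕ)

/-- extend a symbol vector to all of `ℕ` -/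
def vext (v : Fin (2*t+2+m) → ZMod p) (j : ℕ) : ZMod p :=
  if h : j < 2*t+2+m then v ⟨j, h⟩ else 0

/-- the occupation-number vector associated to a symbol vector, on ℕ-indices.
Layout: `[0, g)` bits, `[g, 2g)` complemented bits, `2g` the reservoir, rest `0`,
where `g = (2t+2+m)*L`. -/
def embR (v : Fin (2*t+2+m) → ZMod p) (k : ℕ) : ℕ :=
  if k < (2*t+2+m)*L then bitv (vext t m v (k / L)) (k % L)
  else if k < 2*((2*t+2+m)*L) then
    1 - bitv (vext t m v ((k - (2*t+2+m)*L) / L)) ((k - (2*t+2+m)*L) % L)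
  else if k = 2*((2*t+2+m)*L) then N - (2*t+2+m)*L
  else 0

/-- the occupation-number vector as a `Fin N`-tuple -/
def emb (v : Fin (2*t+2+m) → ZMod p) : Fin N → ℕ := fun k => embR N t m L v k.val

lemma idx_lt' {ns L : ℕ} {j l : ℕ} (hj : j < ns) (hl : l < L) :
    j*L + l < ns*L := by
  have h1 : j*L + l < (j+1)*L := by
    have : (j+1)*L = j*L + L := by ring
    omega
  exact lt_of_lt_of_le h1 (Nat.mul_le_mul_right L (by omega))

lemma idx_lt (hL : 0 < L) {j l : ℕ} (hj : j < 2*t+2+m) (hl : l < L) :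
    j*L + l < (2*t+2+m)*L := idx_lt' hj hl

lemma idx_div (hL : 0 < L) {j l : ℕ} (hl : l < L) : (j*L + l) / L = j := by
  rw [add_comm, Nat.add_mul_div_right _ _ hL, Nat.div_eq_of_lt hl, zero_add]

lemma idx_mod {j l : ℕ} (hl : l < L) : (j*L + l) % L = l := by
  rw [add_comm, Nat.add_mul_mod_self_right, Nat.mod_eq_of_lt hl]

lemma embR_bit (hL : 0 < L) (v : Fin (2*t+2+m) → ZMod p) (j : Fin (2*t+2+m)) {l : ℕ}
    (hl : l < L) : embR N t m L v ((j:ℕ)*L + l) = bitv (v j) l := by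
  have hlt := idx_lt t m L hL j.2 hl
  rw [embR, if_pos hlt, idx_div L hL hl, idx_mod L hl]
  congr 1
  rw [vext, dif_pos j.2]

lemma embR_bitc (hL : 0 < L) (v : Fin (2*t+2+m) → ZMod p) (j : Fin (2*t+2+m)) {l : ℕ}
    (hl : l < L) :
    embR N t m L v ((2*t+2+m)*L + ((j:ℕ)*L + l)) = 1 - bitv (v j) l := by
  have hlt := idx_lt t m L hL j.2 hl
  rw [embR, if_neg (by omega), if_pos (by omega)]
  rw [Nat.add_sub_cancel_left, idx_div L hL hl, idx_mod L hl]
  congr 2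
  rw [vext, dif_pos j.2]

lemma embR_res (v : Fin (2*t+2+m) → ZMod p) :
    embR N t m L v (2*((2*t+2+m)*L)) = N - (2*t+2+m)*L := by
  have hg : ¬ (2*((2*t+2+m)*L) < (2*t+2+m)*L) := by omega
  rw [embR, if_neg hg, if_neg (by omega), if_pos rfl]

lemma embR_dead (v : Fin (2*t+2+m) → ZMod p) {k : ℕ} (hk : 2*((2*t+2+m)*L) < k) :
    embR N t m L v k = 0 := by
  rw [embR, if_neg (by omega), if_neg (by omega), if_neg (by omega)]

lemma embR_le_one (v : Fin (2*t+2+m) → ZMod p) {k : ℕ} (hk : k < 2*((2*t+2+m)*L)) :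
    embR N t m L v k ≤ 1 := by
  rw [embR]
  repeat' split
  all_goals first | exact bitv_le_one _ _ | omega

end Emb

/-- reindexing a sum over a block structure -/
lemma sum_block {M : Type*} [AddCommMonoid M] (ns L : ℕ) (hL : 0 < L) (f : ℕ → M) :
    ∑ k ∈ Finset.range (ns*L), f k
      = ∑ j ∈ Finset.range ns, ∑ l ∈ Finset.range L, f (j*L + l) := by
  rw [← Finset.sum_product']
  apply Finset.sum_nbij' (i := fun k => (k / L, k % L)) (j := fun jl => jl.1*L + jl.2)
  · intro k hk
    rw [Finset.mem_range] at hk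
    rw [Finset.mem_product, Finset.mem_range, Finset.mem_range]
    exact ⟨(Nat.div_lt_iff_lt_mul hL).2 hk, Nat.mod_lt _ hL⟩
  · intro jl hjl
    rw [Finset.mem_product, Finset.mem_range, Finset.mem_range] at hjl
    rw [Finset.mem_range]
    exact idx_lt' hjl.1 hjl.2
  · intro k _
    simp only
    rw [mul_comm]
    exact Nat.div_add_mod k L
  · intro jl hjl
    rw [Finset.mem_product, Finset.mem_range, Finset.mem_range] at hjl
    exact Prod.ext (idx_div L hL hjl.2) (idx_mod L hjl.2)
  · intro k _
    simp only
    congr 1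
    rw [mul_comm]
    exact (Nat.div_add_mod k L).symm

section EmbFacts
open Finset
variable {p : ℕ} [Fact p.Prime] (N t m L : ℕ)

lemma sum_range_split {M : Type*} [AddCommMonoid M] (a b : ℕ) (f : ℕ → M) :
    ∑ k ∈ range (a+b), f k = ∑ k ∈ range a, f k + ∑ k ∈ range b, f (a+k) := by
  induction b with
  | zero => simp
  | succ n ih =>
    rw [show a+(n+1) = (a+n)+1 by omega, Finset.sum_range_succ, ih, Finset.sum_range_succ,
      add_assoc]

lemma emb_pair_decomp (hL : 0 < L) (v : Fin (2*t+2+m) → ZMod p) {k : ℕ}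
    (hk : k < (2*t+2+m)*L) :
    ∃ (j : Fin (2*t+2+m)) (l : ℕ), l < L ∧ k = (j:ℕ)*L + l ∧
      embR N t m L v k = bitv (v j) l ∧
      embR N t m L v ((2*t+2+m)*L + k) = 1 - bitv (v j) l := by
  have hj : k / L < 2*t+2+m := (Nat.div_lt_iff_lt_mul hL).2 hk
  have hdm : (k/L)*L + k%L = k := by rw [mul_comm]; exact Nat.div_add_mod k L
  refine ⟨⟨k/L, hj⟩, k % L, Nat.mod_lt _ hL, hdm.symm, ?_, ?_⟩
  · conv_lhs => rw [← hdm]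
    exact embR_bit N t m L hL v ⟨k/L, hj⟩ (Nat.mod_lt _ hL)
  · conv_lhs => rw [← hdm]
    exact embR_bitc N t m L hL v ⟨k/L, hj⟩ (Nat.mod_lt _ hL)

lemma emb_sum (hL : 0 < L) (hgN : 2*((2*t+2+m)*L) < N) (v : Fin (2*t+2+m) → ZMod p) :
    ∑ k : Fin N, emb N t m L v k = N := by
  have hg2 : 2*((2*t+2+m)*L) + 1 ≤ N := by omega
  have h0 : ∑ k : Fin N, emb N t m L v k = ∑ k ∈ range N, embR N t m L v k :=
    Fin.sum_univ_eq_sum_range _ N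
  rw [h0]
  rw [← Finset.sum_subset (Finset.range_subset_range.2 hg2) (fun x hx hxn => by
    rw [Finset.mem_range] at hx
    rw [Finset.mem_range] at hxn
    exact embR_dead N t m L v (by omega))]
  rw [Finset.sum_range_succ, embR_res]
  have h2 : ∑ k ∈ range (2*((2*t+2+m)*L)), embR N t m L v k = (2*t+2+m)*L := by
    have : 2*((2*t+2+m)*L) = (2*t+2+m)*L + (2*t+2+m)*L := by ring
    rw [this, Finset.range_eq_Ico,
      ← Finset.sum_Ico_consecutive _ (Nat.zero_le ((2*t+2+m)*L)) (by omega), ← Finset.range_eq_Ico,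
      Finset.sum_Ico_eq_sum_range]
    simp only [Nat.add_sub_cancel_left]
    rw [← Finset.sum_add_distrib]
    have hterm : ∀ k ∈ range ((2*t+2+m)*L),
        embR N t m L v k + embR N t m L v ((2*t+2+m)*L + k) = 1 := by
      intro k hk
      rw [Finset.mem_range] at hk
      obtain ⟨j, l, hl, rfl, h1, h2⟩ := emb_pair_decomp N t m L hL v hk
      have := bitv_le_one (v j) l
      omega
    rw [Finset.sum_congr rfl hterm]
    simp
  rw [h2]
  omega

lemma emb_inj (hL : 0 < L) (hpL : p ≤ 2^L) (hgN : 2*((2*t+2+m)*L) < N)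
    {v v' : Fin (2*t+2+m) → ZMod p} (h : emb N t m L v = emb N t m L v') : v = v' := by
  funext j
  apply eq_of_bitv hpL
  intro l hl
  have hkg : (j:ℕ)*L + l < (2*t+2+m)*L := idx_lt' j.2 hl
  have hkN : (j:ℕ)*L + l < N := by omega
  have := congrFun h ⟨(j:ℕ)*L + l, hkN⟩
  rw [emb, emb] at this
  simp only at this
  rw [embR_bit N t m L hL v j hl, embR_bit N t m L hL v' j hl] at this
  exact this

/-- extension of a `Fin N`-tuple to `ℕ` -/
def extN (e : Fin N → ℕ) (k : ℕ) : ℕ := if h : k < N then e ⟨k, h⟩ else 0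

lemma extN_apply (e : Fin N → ℕ) (k : Fin N) : extN N e (k:ℕ) = e k := by
  rw [extN, dif_pos k.2]

lemma extN_sum (e : Fin N → ℕ) : ∑ k ∈ range N, extN N e k = ∑ k : Fin N, e k := by
  rw [← Fin.sum_univ_eq_sum_range (fun k => extN N e k) N]
  exact Finset.sum_congr rfl (fun k _ => extN_apply N e k)

/-- block mass of a tuple at symbol-block `j` -/
def bmass (e : Fin N → ℕ) (j : ℕ) : ℕ :=
  ∑ l ∈ range L, (extN N e (j*L + l) + extN N e ((2*t+2+m)*L + (j*L + l)))

/-- if every symbol in `S` carries block mass at least 1, then `S` is small -/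
lemma blocksum_le (hL : 0 < L) (hgN : 2*((2*t+2+m)*L) < N) (e : Fin N → ℕ) (tt : ℕ)
    (he : ∑ k, e k = tt) (S : Finset (Fin (2*t+2+m)))
    (h1 : ∀ j ∈ S, 1 ≤ bmass N t m L e (j:ℕ)) : S.card ≤ tt := by
  have step2 : S.card ≤ ∑ j ∈ S, bmass N t m L e (j:ℕ) := by
    rw [Finset.card_eq_sum_ones]
    exact Finset.sum_le_sum h1
  have step3 : ∑ j ∈ S, bmass N t m L e (j:ℕ) ≤ ∑ j : Fin (2*t+2+m), bmass N t m L e (j:ℕ) :=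
    Finset.sum_le_sum_of_subset (Finset.subset_univ S)
  have step4 : ∑ j : Fin (2*t+2+m), bmass N t m L e (j:ℕ)
      = ∑ j ∈ range (2*t+2+m), bmass N t m L e j :=
    Fin.sum_univ_eq_sum_range _ _
  have step5 : ∑ j ∈ range (2*t+2+m), bmass N t m L e j
      = ∑ k ∈ range ((2*t+2+m)*L), extN N e k
        + ∑ k ∈ range ((2*t+2+m)*L), extN N e ((2*t+2+m)*L + k) := by
    unfold bmass
    rw [sum_block (2*t+2+m) L hL (fun k => extN N e k),
      sum_block (2*t+2+m) L hL (fun k => extN N e ((2*t+2+m)*L + k)),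
      ← Finset.sum_add_distrib]
    exact Finset.sum_congr rfl fun j _ => Finset.sum_add_distrib
  have step6 : ∑ k ∈ range ((2*t+2+m)*L), extN N e k
        + ∑ k ∈ range ((2*t+2+m)*L), extN N e ((2*t+2+m)*L + k)
      = ∑ k ∈ range (2*((2*t+2+m)*L)), extN N e k := by
    have h2 : 2*((2*t+2+m)*L) = (2*t+2+m)*L + (2*t+2+m)*L := by ring
    rw [h2, sum_range_split]
  have step7 : ∑ k ∈ range (2*((2*t+2+m)*L)), extN N e k ≤ ∑ k ∈ range N, extN N e k :=
    Finset.sum_le_sum_of_subset (Finset.range_subset_range.2 (by omega))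
  rw [extN_sum, he] at step7
  omega

/-- key counting estimate: two codewords linked by a `t`-error move差 in at most `t` symbols -/
lemma move_card (hL : 0 < L) (hpL : p ≤ 2^L) (hgN : 2*((2*t+2+m)*L) < N)
    {v v' : Fin (2*t+2+m) → ZMod p} {e f : Fin N → ℕ}
    (hf : ∑ k, f k = t)
    (hfit : ∀ k, e k ≤ emb N t m L v k)
    (heq : ∀ k, emb N t m L v k - e k + f k = emb N t m L v' k) :
    ((univ : Finset (Fin (2*t+2+m))).filter (fun j => v j ≠ v' j)).card ≤ t := by
  apply blocksum_le N t m L hL hgN f t hf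
  intro j hj
  rw [Finset.mem_filter] at hj
  have hbit : ∃ l < L, bitv (v j) l ≠ bitv (v' j) l := by
    by_contra hcon
    push_neg at hcon
    exact hj.2 (eq_of_bitv hpL (fun l hl => hcon l hl))
  obtain ⟨l, hl, hbne⟩ := hbit
  have hkg : (j:ℕ)*L + l < (2*t+2+m)*L := idx_lt' j.2 hl
  have haN : (j:ℕ)*L + l < N := by omega
  have hbN : (2*t+2+m)*L + ((j:ℕ)*L + l) < N := by omega
  set a : Fin N := ⟨(j:ℕ)*L + l, haN⟩
  set b : Fin N := ⟨(2*t+2+m)*L + ((j:ℕ)*L + l), hbN⟩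
  have hva : emb N t m L v a = bitv (v j) l := embR_bit N t m L hL v j hl
  have hv'a : emb N t m L v' a = bitv (v' j) l := embR_bit N t m L hL v' j hl
  have hvb : emb N t m L v b = 1 - bitv (v j) l := embR_bitc N t m L hL v j hl
  have hv'b : emb N t m L v' b = 1 - bitv (v' j) l := embR_bitc N t m L hL v' j hl
  have h1 := hfit a
  have h2 := hfit b
  have h3 := heq a
  have h4 := heq b
  rw [hva] at h1 h3
  rw [hv'a] at h3
  rw [hvb] at h2 h4
  rw [hv'b] at h4
  have hb1 := bitv_le_one (v j) l
  have hb2 := bitv_le_one (v' j) l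
  have hfab : 1 ≤ f a + f b := by omega
  have hfa : f a = extN N f ((j:ℕ)*L + l) := (extN_apply N f a).symm
  have hfb : f b = extN N f ((2*t+2+m)*L + ((j:ℕ)*L + l)) := (extN_apply N f b).symm
  unfold bmass
  calc 1 ≤ f a + f b := hfab
    _ = extN N f ((j:ℕ)*L + l) + extN N f ((2*t+2+m)*L + ((j:ℕ)*L + l)) := by rw [hfa, hfb]
    _ ≤ ∑ l' ∈ range L, (extN N f ((j:ℕ)*L + l') + extN N f ((2*t+2+m)*L + ((j:ℕ)*L + l'))) :=
        Finset.single_le_sum (f := fun l' => extN N f ((j:ℕ)*L + l')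
          + extN N f ((2*t+2+m)*L + ((j:ℕ)*L + l'))) (fun _ _ => Nat.zero_le _)
          (Finset.mem_range.2 hl)

end EmbFacts
section Fits
open Finset
variable {p : ℕ} [Fact p.Prime] (N t m L : ℕ)

/-- conditions on an error pattern away from the bit-blocks -/
def zcond (e : Fin N → ℕ) : Prop :=
  extN N e (2*((2*t+2+m)*L)) ≤ N - (2*t+2+m)*L ∧
    ∀ k, 2*((2*t+2+m)*L) < k → extN N e k = 0

/-- symbols compatible with an error pattern at block `j` -/
def okset (e : Fin N → ℕ) (j : Fin (2*t+2+m)) : Finset (ZMod p) :=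
  univ.filter (fun y => ∀ l, l < L →
    extN N e ((j:ℕ)*L + l) ≤ bitv y l ∧
    extN N e ((2*t+2+m)*L + ((j:ℕ)*L + l)) ≤ 1 - bitv y l)

/-- blocks touched by an error pattern -/
def Jset (e : Fin N → ℕ) : Finset (Fin (2*t+2+m)) :=
  univ.filter (fun j => ∃ l, l < L ∧
    (extN N e ((j:ℕ)*L + l) ≠ 0 ∨ extN N e ((2*t+2+m)*L + ((j:ℕ)*L + l)) ≠ 0))

lemma fits_iff (hL : 0 < L) (hgN : 2*((2*t+2+m)*L) < N)
    (v : Fin (2*t+2+m) → ZMod p) (e : Fin N → ℕ) :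
    (∀ k, e k ≤ emb N t m L v k) ↔
      (zcond N t m L e ∧ ∀ j ∈ Jset N t m L e, v j ∈ okset N t m L e j) := by
  constructor
  · intro h
    refine ⟨⟨?_, ?_⟩, ?_⟩
    · have h2 := h ⟨2*((2*t+2+m)*L), by omega⟩
      rw [emb] at h2
      simp only at h2
      rw [embR_res] at h2
      rw [extN, dif_pos (by omega : 2*((2*t+2+m)*L) < N)]
      exact h2
    · intro k hk
      by_cases hkN : k < N
      · have h2 := h ⟨k, hkN⟩
        rw [emb] at h2
        simp only at h2
        rw [embR_dead N t m L v hk] at h2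
        rw [extN, dif_pos hkN]
        omega
      · rw [extN, dif_neg hkN]
    · intro j _
      rw [okset, Finset.mem_filter]
      refine ⟨Finset.mem_univ _, fun l hl => ?_⟩
      have hkg : (j:ℕ)*L + l < (2*t+2+m)*L := idx_lt' j.2 hl
      constructor
      · have h2 := h ⟨(j:ℕ)*L + l, by omega⟩
        rw [emb] at h2
        simp only at h2
        rw [embR_bit N t m L hL v j hl] at h2
        rw [extN, dif_pos (by omega : (j:ℕ)*L + l < N)]
        exact h2
      · have h2 := h ⟨(2*t+2+m)*L + ((j:ℕ)*L + l), by omega⟩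
        rw [emb] at h2
        simp only at h2
        rw [embR_bitc N t m L hL v j hl] at h2
        rw [extN, dif_pos (by omega : (2*t+2+m)*L + ((j:ℕ)*L + l) < N)]
        exact h2
  · rintro ⟨⟨hres, hdead⟩, hJ⟩ k
    obtain ⟨kv, hkN⟩ := k
    rw [emb]
    simp only
    by_cases h1 : kv < (2*t+2+m)*L
    · have hj : kv / L < 2*t+2+m := (Nat.div_lt_iff_lt_mul hL).2 h1
      have hdm : (kv/L)*L + kv%L = kv := by rw [mul_comm]; exact Nat.div_add_mod kv L
      set j : Fin (2*t+2+m) := ⟨kv/L, hj⟩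
      have hval : embR N t m L v kv = bitv (v j) (kv % L) := by
        conv_lhs => rw [← hdm]
        exact embR_bit N t m L hL v j (Nat.mod_lt _ hL)
      rw [hval]
      have hee : e ⟨kv, hkN⟩ = extN N e ((j:ℕ)*L + (kv % L)) := by
        rw [show (j:ℕ)*L + (kv % L) = kv from hdm, extN, dif_pos hkN]
      rw [hee]
      by_cases hjJ : j ∈ Jset N t m L e
      · have hok := hJ j hjJ
        rw [okset, Finset.mem_filter] at hok
        exact (hok.2 (kv % L) (Nat.mod_lt _ hL)).1
      · rw [Jset, Finset.mem_filter] at hjJ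
        push_neg at hjJ
        have := (hjJ (Finset.mem_univ _) (kv % L) (Nat.mod_lt _ hL)).1
        omega
    · by_cases h2 : kv < 2*((2*t+2+m)*L)
      · have hg : (2*t+2+m)*L ≤ kv := by omega
        have h1' : kv - (2*t+2+m)*L < (2*t+2+m)*L := by omega
        have hj : (kv - (2*t+2+m)*L) / L < 2*t+2+m := (Nat.div_lt_iff_lt_mul hL).2 h1'
        have hdm : ((kv - (2*t+2+m)*L)/L)*L + (kv - (2*t+2+m)*L)%L = kv - (2*t+2+m)*L := by
          rw [mul_comm]; exact Nat.div_add_mod _ L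
        set j : Fin (2*t+2+m) := ⟨(kv - (2*t+2+m)*L)/L, hj⟩
        set l := (kv - (2*t+2+m)*L) % L
        have hkv : kv = (2*t+2+m)*L + ((j:ℕ)*L + l) := by
          show kv = (2*t+2+m)*L + (((kv - (2*t+2+m)*L)/L)*L + (kv - (2*t+2+m)*L)%L)
          omega
        have hval : embR N t m L v kv = 1 - bitv (v j) l := by
          conv_lhs => rw [hkv]
          exact embR_bitc N t m L hL v j (Nat.mod_lt _ hL)
        rw [hval]
        have hee : e ⟨kv, hkN⟩ = extN N e ((2*t+2+m)*L + ((j:ℕ)*L + l)) := by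
          rw [← hkv, extN, dif_pos hkN]
        rw [hee]
        by_cases hjJ : j ∈ Jset N t m L e
        · have hok := hJ j hjJ
          rw [okset, Finset.mem_filter] at hok
          exact (hok.2 l (Nat.mod_lt _ hL)).2
        · rw [Jset, Finset.mem_filter] at hjJ
          push_neg at hjJ
          have := (hjJ (Finset.mem_univ _) l (Nat.mod_lt _ hL)).2
          omega
      · by_cases h3 : kv = 2*((2*t+2+m)*L)
        · subst h3
          rw [embR_res]
          have : e ⟨2*((2*t+2+m)*L), hkN⟩ = extN N e (2*((2*t+2+m)*L)) := by
            rw [extN, dif_pos hkN]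
          omega
        · have hdk : 2*((2*t+2+m)*L) < kv := by omega
          have : e ⟨kv, hkN⟩ = extN N e kv := by rw [extN, dif_pos hkN]
          rw [this, hdead kv hdk]
          exact Nat.zero_le _

lemma jset_card (hL : 0 < L) (hgN : 2*((2*t+2+m)*L) < N) (e : Fin N → ℕ)
    (he : ∑ k, e k = t) : (Jset N t m L e).card ≤ t := by
  apply blocksum_le N t m L hL hgN e t he
  intro j hj
  rw [Jset, Finset.mem_filter] at hj
  obtain ⟨l, hl, hne⟩ := hj.2
  have hterm : 1 ≤ extN N e ((j:ℕ)*L + l) + extN N e ((2*t+2+m)*L + ((j:ℕ)*L + l)) := by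
    omega
  calc 1 ≤ extN N e ((j:ℕ)*L + l) + extN N e ((2*t+2+m)*L + ((j:ℕ)*L + l)) := hterm
    _ ≤ bmass N t m L e (j:ℕ) :=
        Finset.single_le_sum (f := fun l' => extN N e ((j:ℕ)*L + l')
          + extN N e ((2*t+2+m)*L + ((j:ℕ)*L + l'))) (fun _ _ => Nat.zero_le _)
          (Finset.mem_range.2 hl)

lemma cnt_eq (hL : 0 < L) (hgN : 2*((2*t+2+m)*L) < N) (hns : 2*t+2+m ≤ p)
    (e : Fin N → ℕ) (he : ∑ k, e k = t) (hh hh' : Fin m → ZMod p) :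
    ((univ : Finset (Fin (t+1) → ZMod p)).filter
        (fun c => ∀ k, e k ≤ emb N t m L (cw c hh) k)).card =
    ((univ : Finset (Fin (t+1) → ZMod p)).filter
        (fun c => ∀ k, e k ≤ emb N t m L (cw c hh') k)).card := by
  classical
  by_cases hz : zcond N t m L e
  · have hfilter : ∀ (hi : Fin m → ZMod p),
        (univ : Finset (Fin (t+1) → ZMod p)).filter
          (fun c => ∀ k, e k ≤ emb N t m L (cw c hi) k)
        = (univ : Finset (Fin (t+1) → ZMod p)).filter
          (fun c => ∀ j ∈ Jset N t m L e,
            (pev c (pts (2*t+2+m) j) + hipev t hi (pts (2*t+2+m) j)) ∈ okset N t m L e j) := by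
      intro hi
      apply Finset.filter_congr
      intro c _
      rw [fits_iff N t m L hL hgN (cw c hi) e]
      constructor
      · rintro ⟨-, hJ⟩ j hj
        have := hJ j hj
        rwa [show cw c hi j = pev c (pts (2*t+2+m) j) + hipev t hi (pts (2*t+2+m) j) from
          pev_coefv c hi _] at this
      · intro hJ
        refine ⟨hz, fun j hj => ?_⟩
        have := hJ j hj
        rwa [show cw c hi j = pev c (pts (2*t+2+m) j) + hipev t hi (pts (2*t+2+m) j) from
          pev_coefv c hi _]
    rw [hfilter hh, hfilter hh']
    exact count_translate hns (by omega) _ (jset_card N t m L hL hgN e he) _ _ _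
  · have h1 : ∀ (hi : Fin m → ZMod p),
        (univ : Finset (Fin (t+1) → ZMod p)).filter
          (fun c => ∀ k, e k ≤ emb N t m L (cw c hi) k) = ∅ := by
      intro hi
      rw [Finset.filter_eq_empty_iff]
      intro c _
      intro hfit
      exact hz ((fits_iff N t m L hL hgN (cw c hi) e).1 hfit).1
    rw [h1 hh, h1 hh']
end Fits
section Values
open Finset
variable {p : ℕ} [Fact p.Prime] (N t m L : ℕ)

lemma prod_fact_eq (n : Fin N → ℕ) (r : Fin N) (h1 : ∀ k, k ≠ r → n k ≤ 1) :
    ∏ k, (n k)! = (n r)! := by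
  apply Finset.prod_eq_single_of_mem r (Finset.mem_univ r)
  intro b _ hb
  have := h1 b hb
  interval_cases (n b) <;> rfl

lemma emb_le_one_off_res (hL : 0 < L) (hgN : 2*((2*t+2+m)*L) < N)
    (v : Fin (2*t+2+m) → ZMod p) (k : Fin N)
    (hk : k ≠ ⟨2*((2*t+2+m)*L), by omega⟩) : emb N t m L v k ≤ 1 := by
  rcases lt_trichotomy (k:ℕ) (2*((2*t+2+m)*L)) with h | h | h
  · exact embR_le_one N t m L v h
  · exact absurd (Fin.ext h) hk
  · simp only [emb]; rw [embR_dead N t m L v h]; omega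

lemma multinat_emb (hL : 0 < L) (hgN : 2*((2*t+2+m)*L) < N) (v : Fin (2*t+2+m) → ZMod p) :
    multinat (emb N t m L v) * (N - (2*t+2+m)*L)! = N ! := by
  have hprod : ∏ k, (emb N t m L v k)! = (N - (2*t+2+m)*L)! := by
    rw [prod_fact_eq N (emb N t m L v) ⟨2*((2*t+2+m)*L), by omega⟩
      (emb_le_one_off_res N t m L hL hgN v)]
    congr 1
    exact embR_res N t m L v
  have hs := Nat.multinomial_spec (univ : Finset (Fin N)) (emb N t m L v)
  rw [hprod, emb_sum N t m L hL hgN v] at hs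
  rw [multinat, mul_comm]
  exact hs

lemma multinat_emb_sub (hL : 0 < L) (hgN : 2*((2*t+2+m)*L) < N)
    (v : Fin (2*t+2+m) → ZMod p) (e : Fin N → ℕ) (he : ∑ k, e k = t)
    (hfit : ∀ k, e k ≤ emb N t m L v k) :
    multinat (fun k => emb N t m L v k - e k)
      * (N - (2*t+2+m)*L - extN N e (2*((2*t+2+m)*L)))! = (N - t)! := by
  set r : Fin N := ⟨2*((2*t+2+m)*L), by omega⟩
  have hsum : ∑ k, (emb N t m L v k - e k) = N - t := by
    have h1 : ∑ k, (emb N t m L v k - e k + e k) = ∑ k, emb N t m L v k :=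
      Finset.sum_congr rfl (fun k _ => by have := hfit k; omega)
    rw [Finset.sum_add_distrib, he, emb_sum N t m L hL hgN v] at h1
    have ht : t ≤ N := by
      have h2 : ∑ k, e k ≤ ∑ k, emb N t m L v k := Finset.sum_le_sum fun k _ => hfit k
      rw [he, emb_sum N t m L hL hgN v] at h2
      exact h2
    omega
  have hprod : ∏ k, (emb N t m L v k - e k)!
      = (N - (2*t+2+m)*L - extN N e (2*((2*t+2+m)*L)))! := by
    rw [prod_fact_eq N _ r (fun k hk => by
      have := emb_le_one_off_res N t m L hL hgN v k hk
      omega)]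
    congr 1
    have h2 : emb N t m L v r = N - (2*t+2+m)*L := embR_res N t m L v
    have h3 : extN N e (2*((2*t+2+m)*L)) = e r := by rw [extN, dif_pos]
    omega
  have hs := Nat.multinomial_spec (univ : Finset (Fin N)) (fun k => emb N t m L v k - e k)
  rw [hprod, hsum] at hs
  rw [multinat, mul_comm]
  exact hs

lemma multinat_pos {q : ℕ} (n : Fin q → ℕ) : 0 < multinat n := by
  rw [multinat]
  exact Nat.multinomial_pos _ _

lemma klCoeff_not_fit {q : ℕ} (n e f : Fin q → ℕ) (h : ∃ k, n k < e k) :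
    klCoeff n e f = 0 := by
  rw [klCoeff, multZ, if_neg, Nat.cast_zero, zero_div]
  push_neg
  obtain ⟨k, hk⟩ := h
  exact ⟨k, by omega⟩

lemma klCoeff_diag (hL : 0 < L) (hgN : 2*((2*t+2+m)*L) < N)
    (v : Fin (2*t+2+m) → ZMod p) (e : Fin N → ℕ) (he : ∑ k, e k = t)
    (hfit : ∀ k, e k ≤ emb N t m L v k) :
    klCoeff (emb N t m L v) e e
      = ((N - t)! * (N - (2*t+2+m)*L)! : ℝ)
        / (((N - (2*t+2+m)*L - extN N e (2*((2*t+2+m)*L)))! * N ! : ℕ) : ℝ) := by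
  have hne : (fun k => emb N t m L v k - e k + e k) = emb N t m L v := by
    funext k
    have := hfit k
    omega
  rw [klCoeff, hne]
  rw [multZ, if_pos (fun i => by have := hfit i; omega)]
  have htn : (fun i => ((emb N t m L v i : ℤ) - (e i : ℤ)).toNat)
      = fun i => emb N t m L v i - e i := by
    funext i
    omega
  rw [htn]
  rw [Real.sqrt_mul_self (Nat.cast_nonneg _)]
  have hA := multinat_emb_sub N t m L hL hgN v e he hfit
  have hB := multinat_emb N t m L hL hgN v
  have hAr : (multinat (fun k => emb N t m L v k - e k) : ℝ)
      * ((N - (2*t+2+m)*L - extN N e (2*((2*t+2+m)*L)))! : ℝ) = ((N - t)! : ℝ) := by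
    exact_mod_cast congrArg (Nat.cast (R := ℝ)) hA
  have hBr : (multinat (emb N t m L v) : ℝ) * ((N - (2*t+2+m)*L)! : ℝ) = (N ! : ℝ) := by
    exact_mod_cast congrArg (Nat.cast (R := ℝ)) hB
  have hBpos : (0:ℝ) < (multinat (emb N t m L v) : ℝ) := by
    exact_mod_cast multinat_pos _
  have hdpos : (0:ℝ) < (((N - (2*t+2+m)*L - extN N e (2*((2*t+2+m)*L)))! * N ! : ℕ) : ℝ) := by
    exact_mod_cast Nat.mul_pos (Nat.factorial_pos _) (Nat.factorial_pos _)
  rw [show (Nat.multinomial univ fun i => emb N t m L v i - e i)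
    = multinat (fun i => emb N t m L v i - e i) from rfl]
  rw [div_eq_div_iff hBpos.ne' hdpos.ne']
  push_cast
  rw [← hAr, ← hBr]
  ring

end Values
section Family
open Finset
variable {p : ℕ} [Fact p.Prime] (N t m L : ℕ) {Kn : ℕ}

/-- supports of the codewords -/
def Scode (msg : Fin Kn → Fin m → ZMod p) (i : Fin Kn) : Finset (Fin N → ℕ) :=
  (univ : Finset (Fin (t+1) → ZMod p)).image (fun c => emb N t m L (cw c (msg i)))

/-- the coefficient vectors: indicators of the supports -/
noncomputable def alphaF (msg : Fin Kn → Fin m → ZMod p) (i : Fin Kn) (n : Fin N → ℕ) : ℝ :=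
  if n ∈ Scode N t m L msg i then 1 else 0

variable (msg : Fin Kn → Fin m → ZMod p)

lemma mem_Scode {i : Fin Kn} {n : Fin N → ℕ} :
    n ∈ Scode N t m L msg i ↔ ∃ c, emb N t m L (cw c (msg i)) = n := by
  simp [Scode]

lemma alphaF_nonneg (i : Fin Kn) (n : Fin N → ℕ) : 0 ≤ alphaF N t m L msg i n := by
  rw [alphaF]; split <;> norm_num

lemma alphaF_mem {i : Fin Kn} {n : Fin N → ℕ} (h : n ∈ Scode N t m L msg i) :
    alphaF N t m L msg i n = 1 := by rw [alphaF, if_pos h]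

lemma alphaF_not_mem {i : Fin Kn} {n : Fin N → ℕ} (h : n ∉ Scode N t m L msg i) :
    alphaF N t m L msg i n = 0 := by rw [alphaF, if_neg h]

lemma alphaF_ne_zero {i : Fin Kn} {n : Fin N → ℕ} (h : alphaF N t m L msg i n ≠ 0) :
    n ∈ Scode N t m L msg i := by
  by_contra hn
  exact h (alphaF_not_mem N t m L msg hn)

/-- key injectivity of the family of codeword supports -/
lemma emb_cw_inj (hL : 0 < L) (hns : 2*t+2+m ≤ p) (hpL : p ≤ 2^L)
    (hgN : 2*((2*t+2+m)*L) < N) (hmsg : Function.Injective msg)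
    {i i' : Fin Kn} {c c' : Fin (t+1) → ZMod p}
    (hE : emb N t m L (cw c (msg i)) = emb N t m L (cw c' (msg i'))) : i = i' ∧ c = c' := by
  have hv : cw c (msg i) = cw c' (msg i') := emb_inj N t m L hL hpL hgN hE
  have hco : coefv c (msg i) = coefv c' (msg i') := by
    by_contra hd
    have hd0 : coefv c (msg i) - coefv c' (msg i') ≠ 0 := sub_ne_zero_of_ne hd
    have hvan := pev_vanish_card (k := t+1+m) (by omega) _ hd0 (pts (p := p) (2*t+2+m))
      (pts_inj hns)
    have hall : (univ : Finset (Fin (2*t+2+m))).filter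
        (fun j => pev (coefv c (msg i) - coefv c' (msg i')) (pts (2*t+2+m) j) = 0) = univ := by
      rw [Finset.filter_eq_self]
      intro j _
      rw [pev_sub, sub_eq_zero]
      exact congrFun hv j
    rw [hall] at hvan
    have hcard : (univ : Finset (Fin (2*t+2+m))).card = 2*t+2+m := by simp
    omega
  obtain ⟨hc, hmm⟩ := coefv_inj hco
  exact ⟨hmsg hmm, hc⟩

/-- the move lemma: an error pair linking two codeword supports forces them equal -/
lemma move_full (hL : 0 < L) (hns : 2*t+2+m ≤ p) (hpL : p ≤ 2^L)
    (hgN : 2*((2*t+2+m)*L) < N) (hmsg : Function.Injective msg)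
    {i i' : Fin Kn} {c c' : Fin (t+1) → ZMod p} {e f : Fin N → ℕ}
    (he : ∑ k, e k = t) (hf : ∑ k, f k = t)
    (hfit : ∀ k, e k ≤ emb N t m L (cw c (msg i)) k)
    (heqf : (fun k => emb N t m L (cw c (msg i)) k - e k + f k)
      = emb N t m L (cw c' (msg i'))) :
    i = i' ∧ c = c' ∧ e = f := by
  have heq : ∀ k, emb N t m L (cw c (msg i)) k - e k + f k
      = emb N t m L (cw c' (msg i')) k := fun k => congrFun heqf k
  by_cases hee : c = c' ∧ msg i = msg i'
  · have hv : cw c (msg i) = cw c' (msg i') := by rw [hee.1, hee.2]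
    refine ⟨hmsg hee.2, hee.1, ?_⟩
    funext k
    have h1 := hfit k
    have h2 := heq k
    rw [← hv] at h2
    omega
  · have hd := cw_dist hns hee
    have hm := move_card N t m L hL hpL hgN hf hfit heq
    omega

lemma Scode_subset (hL : 0 < L) (hgN : 2*((2*t+2+m)*L) < N) (i : Fin Kn) :
    Scode N t m L msg i ⊆ simplex N N := by
  intro n hn
  obtain ⟨c, rfl⟩ := (mem_Scode N t m L msg).1 hn
  rw [simplex, Finset.Nat.mem_antidiagonalTuple]
  exact emb_sum N t m L hL hgN _

/-- sums of a function against an indicator coefficient vector -/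
lemma sum_supp (hL : 0 < L) (hns : 2*t+2+m ≤ p) (hpL : p ≤ 2^L)
    (hgN : 2*((2*t+2+m)*L) < N) (hmsg : Function.Injective msg)
    (i : Fin Kn) (Y : (Fin N → ℕ) → ℝ) :
    ∑ n ∈ simplex N N, alphaF N t m L msg i n * Y n
      = ∑ c : Fin (t+1) → ZMod p, Y (emb N t m L (cw c (msg i))) := by
  have h1 : ∀ n ∈ simplex N N, alphaF N t m L msg i n * Y n
      = if n ∈ Scode N t m L msg i then Y n else 0 := by
    intro n _
    by_cases hn : n ∈ Scode N t m L msg i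
    · rw [alphaF_mem N t m L msg hn, if_pos hn, one_mul]
    · rw [alphaF_not_mem N t m L msg hn, if_neg hn, zero_mul]
  rw [Finset.sum_congr rfl h1, Finset.sum_ite_mem]
  have hinter : simplex N N ∩ Scode N t m L msg i = Scode N t m L msg i :=
    Finset.inter_eq_right.2 (Scode_subset N t m L msg hL hgN i)
  rw [hinter, Scode, Finset.sum_image ?hinj]
  case hinj =>
    intro c _ c' _ hE
    exact (emb_cw_inj N t m L msg hL hns hpL hgN hmsg hE).2

end Family
section Assemble
open Finset
variable {p : ℕ} [Fact p.Prime] (N t m L : ℕ) {Kn : ℕ}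
variable (msg : Fin Kn → Fin m → ZMod p)

lemma Phi_eq (hL : 0 < L) (hns : 2*t+2+m ≤ p) (hpL : p ≤ 2^L)
    (hgN : 2*((2*t+2+m)*L) < N) (hmsg : Function.Injective msg)
    (i : Fin Kn) (e : Fin N → ℕ) (he : ∑ k, e k = t) :
    ∑ n ∈ simplex N N, alphaF N t m L msg i n
        * alphaF N t m L msg i (fun k => n k - e k + e k) * klCoeff n e e
      = (((univ : Finset (Fin (t+1) → ZMod p)).filter
            (fun c => ∀ k, e k ≤ emb N t m L (cw c (msg i)) k)).card : ℝ)
          * (((N - t)! * (N - (2*t+2+m)*L)! : ℝ)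
            / (((N - (2*t+2+m)*L - extN N e (2*((2*t+2+m)*L)))! * N ! : ℕ) : ℝ)) := by
  classical
  have hassoc : ∀ n ∈ simplex N N, alphaF N t m L msg i n
        * alphaF N t m L msg i (fun k => n k - e k + e k) * klCoeff n e e
      = alphaF N t m L msg i n
        * (alphaF N t m L msg i (fun k => n k - e k + e k) * klCoeff n e e) := by
    intro n _; ring
  rw [Finset.sum_congr rfl hassoc,
    sum_supp N t m L msg hL hns hpL hgN hmsg i
      (fun n => alphaF N t m L msg i (fun k => n k - e k + e k) * klCoeff n e e)]
  have h2 : ∀ c : Fin (t+1) → ZMod p,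
      alphaF N t m L msg i (fun k => emb N t m L (cw c (msg i)) k - e k + e k)
        * klCoeff (emb N t m L (cw c (msg i))) e e
      = if (∀ k, e k ≤ emb N t m L (cw c (msg i)) k)
          then (((N - t)! * (N - (2*t+2+m)*L)! : ℝ)
            / (((N - (2*t+2+m)*L - extN N e (2*((2*t+2+m)*L)))! * N ! : ℕ) : ℝ))
          else 0 := by
    intro c
    by_cases hfit : ∀ k, e k ≤ emb N t m L (cw c (msg i)) k
    · have hne : (fun k => emb N t m L (cw c (msg i)) k - e k + e k)
          = emb N t m L (cw c (msg i)) := by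
        funext k; have := hfit k; omega
      rw [hne, alphaF_mem N t m L msg ((mem_Scode N t m L msg).2 ⟨c, rfl⟩), one_mul,
        klCoeff_diag N t m L hL hgN _ e he hfit, if_pos hfit]
    · push_neg at hfit
      obtain ⟨k, hk⟩ := hfit
      rw [klCoeff_not_fit _ _ _ ⟨k, hk⟩, mul_zero, if_neg]
      push_neg
      exact ⟨k, hk⟩
  rw [Finset.sum_congr rfl (fun c _ => h2 c), Finset.sum_ite, Finset.sum_const,
    Finset.sum_const_zero, add_zero, nsmul_eq_mul]

lemma construction (Kn' : ℕ) (hL : 0 < L) (hns : 2*t+2+m ≤ p) (hpL : p ≤ 2^L)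
    (hKp : Kn' ≤ p^m) (hgN : 2*((2*t+2+m)*L) < N) :
    ∃ α : Fin Kn' → (Fin N → ℕ) → ℝ,
      (∀ i, ∃ n, α i n ≠ 0) ∧
      (∀ i, ∀ n, 0 ≤ α i n) ∧
      (∀ i, ∀ n, α i n ≠ 0 → ∑ x, n x = N) ∧
      (∀ i j, ∀ n, i ≠ j → α i n ≠ 0 → α j n = 0) ∧
      condR1 N Kn' N α ∧ condR2 N Kn' N α ∧ condR3 N Kn' N t α ∧ condR4 N Kn' N t α := by
  classical
  haveI : NeZero p := ⟨(Fact.out : p.Prime).ne_zero⟩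
  have hcard : Fintype.card (Fin Kn') ≤ Fintype.card (Fin m → ZMod p) := by
    rw [Fintype.card_fun, ZMod.card, Fintype.card_fin, Fintype.card_fin]
    exact hKp
  obtain ⟨msg⟩ := Function.Embedding.nonempty_of_card_le hcard
  have hmsg : Function.Injective msg := msg.injective
  have hdisj : ∀ (i j : Fin Kn') (n : Fin N → ℕ), i ≠ j →
      alphaF N t m L (⇑msg) i n ≠ 0 → alphaF N t m L (⇑msg) j n = 0 := by
    intro i j n hij h
    refine alphaF_not_mem N t m L (⇑msg) ?_
    intro hmem
    obtain ⟨c, hc⟩ := (mem_Scode N t m L (⇑msg)).1 (alphaF_ne_zero N t m L (⇑msg) h)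
    obtain ⟨c', hc'⟩ := (mem_Scode N t m L (⇑msg)).1 hmem
    exact hij (emb_cw_inj N t m L (⇑msg) hL hns hpL hgN hmsg (hc.trans hc'.symm)).1
  refine ⟨alphaF N t m L (⇑msg), ?_, ?_, ?_, hdisj, ?_, ?_, ?_, ?_⟩
  · intro i
    refine ⟨emb N t m L (cw 0 (msg i)), ?_⟩
    rw [alphaF_mem N t m L (⇑msg) ((mem_Scode N t m L (⇑msg)).2 ⟨0, rfl⟩)]
    norm_num
  · intro i n
    exact alphaF_nonneg N t m L (⇑msg) i n
  · intro i n h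
    obtain ⟨c, hc⟩ := (mem_Scode N t m L (⇑msg)).1 (alphaF_ne_zero N t m L (⇑msg) h)
    rw [← hc]
    exact emb_sum N t m L hL hgN _
  · -- condR1
    intro i j hij
    apply Finset.sum_eq_zero
    intro n _
    by_cases h1 : alphaF N t m L (⇑msg) i n = 0
    · rw [h1, zero_mul]
    · rw [hdisj i j n hij h1, mul_zero]
  · -- condR2
    intro i j
    have hval : ∀ i : Fin Kn', ∑ n ∈ simplex N N, (alphaF N t m L (⇑msg) i n)^2
        = (Fintype.card (Fin (t+1) → ZMod p) : ℝ) := by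
      intro i
      have hsq : ∀ n ∈ simplex N N, (alphaF N t m L (⇑msg) i n)^2
          = alphaF N t m L (⇑msg) i n * alphaF N t m L (⇑msg) i n := by
        intro n _; ring
      rw [Finset.sum_congr rfl hsq,
        sum_supp N t m L (⇑msg) hL hns hpL hgN hmsg i (alphaF N t m L (⇑msg) i)]
      have h1 : ∀ c : Fin (t+1) → ZMod p,
          alphaF N t m L (⇑msg) i (emb N t m L (cw c (msg i))) = 1 := fun c =>
        alphaF_mem N t m L (⇑msg) ((mem_Scode N t m L (⇑msg)).2 ⟨c, rfl⟩)
      rw [Finset.sum_congr rfl (fun c _ => h1 c), Finset.sum_const, Finset.card_univ,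
        nsmul_eq_mul, mul_one]
    rw [hval i, hval j]
  · -- condR3
    intro i j hij e hemem f hfmem
    have he : ∑ k, e k = t := Finset.Nat.mem_antidiagonalTuple.mp hemem
    have hf : ∑ k, f k = t := Finset.Nat.mem_antidiagonalTuple.mp hfmem
    apply Finset.sum_eq_zero
    intro n _
    by_cases h1 : alphaF N t m L (⇑msg) i n = 0
    · rw [h1, zero_mul, zero_mul]
    by_cases h2 : alphaF N t m L (⇑msg) j (fun k => n k - e k + f k) = 0
    · rw [h2, mul_zero, zero_mul]
    obtain ⟨c, hc⟩ := (mem_Scode N t m L (⇑msg)).1 (alphaF_ne_zero N t m L (⇑msg) h1)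
    obtain ⟨c', hc'⟩ := (mem_Scode N t m L (⇑msg)).1 (alphaF_ne_zero N t m L (⇑msg) h2)
    subst hc
    by_cases hfit : ∀ k, e k ≤ emb N t m L (cw c (msg i)) k
    · exact absurd (move_full N t m L (⇑msg) hL hns hpL hgN hmsg he hf hfit hc'.symm).1 hij
    · push_neg at hfit
      obtain ⟨k, hk⟩ := hfit
      rw [klCoeff_not_fit _ _ _ ⟨k, hk⟩, mul_zero]
  · -- condR4
    intro i j hij e hemem f hfmem
    have he : ∑ k, e k = t := Finset.Nat.mem_antidiagonalTuple.mp hemem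
    have hf : ∑ k, f k = t := Finset.Nat.mem_antidiagonalTuple.mp hfmem
    have hsplit : ∀ n ∈ simplex N N,
        (alphaF N t m L (⇑msg) i n * alphaF N t m L (⇑msg) i (fun k => n k - e k + f k)
          - alphaF N t m L (⇑msg) j n * alphaF N t m L (⇑msg) j (fun k => n k - e k + f k))
          * klCoeff n e f
        = alphaF N t m L (⇑msg) i n * alphaF N t m L (⇑msg) i (fun k => n k - e k + f k)
            * klCoeff n e f
          - alphaF N t m L (⇑msg) j n * alphaF N t m L (⇑msg) j (fun k => n k - e k + f k)
            * klCoeff n e f := by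
      intro n _; ring
    rw [Finset.sum_congr rfl hsplit, Finset.sum_sub_distrib]
    by_cases hef : e = f
    · subst hef
      rw [Phi_eq N t m L (⇑msg) hL hns hpL hgN hmsg i e he,
        Phi_eq N t m L (⇑msg) hL hns hpL hgN hmsg j e he,
        cnt_eq N t m L hL hgN hns e he (msg i) (msg j)]
      ring
    · have hzero : ∀ iw : Fin Kn', ∑ n ∈ simplex N N,
          alphaF N t m L (⇑msg) iw n * alphaF N t m L (⇑msg) iw (fun k => n k - e k + f k)
            * klCoeff n e f = 0 := by
        intro iw
        apply Finset.sum_eq_zero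
        intro n _
        by_cases h1 : alphaF N t m L (⇑msg) iw n = 0
        · rw [h1, zero_mul, zero_mul]
        by_cases h2 : alphaF N t m L (⇑msg) iw (fun k => n k - e k + f k) = 0
        · rw [h2, mul_zero, zero_mul]
        obtain ⟨c, hc⟩ := (mem_Scode N t m L (⇑msg)).1 (alphaF_ne_zero N t m L (⇑msg) h1)
        obtain ⟨c', hc'⟩ := (mem_Scode N t m L (⇑msg)).1 (alphaF_ne_zero N t m L (⇑msg) h2)
        subst hc
        by_cases hfit : ∀ k, e k ≤ emb N t m L (cw c (msg iw)) k
        · exact absurd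
            (move_full N t m L (⇑msg) hL hns hpL hgN hmsg he hf hfit hc'.symm).2.2 hef
        · push_neg at hfit
          obtain ⟨k, hk⟩ := hfit
          rw [klCoeff_not_fit _ _ _ ⟨k, hk⟩, mul_zero]
      rw [hzero i, hzero j, sub_zero]
end Assemble
section Asymptotics
open Finset Filter

lemma two_hundred_mul_log_le (N : ℕ) (hN : 2400 ≤ N) : 200 * Nat.log 2 N ≤ N := by
  have hsub : ∀ k, 12 ≤ k → 200 * k ≤ 2^k := by
    intro k hk
    induction k with
    | zero => omega
    | succ n ih =>
      rcases Nat.lt_or_ge n 12 with h | h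
      · interval_cases n <;> simp_all
      · have h1 := ih (by omega)
        have h3 : 2^(n+1) = 2^n + 2^n := by ring
        omega
  rcases Nat.lt_or_ge (Nat.log 2 N) 12 with h | h
  · omega
  · have h1 := hsub _ h
    have h2 : 2^(Nat.log 2 N) ≤ N := Nat.pow_log_le_self 2 (by omega)
    omega

lemma natlog_le_logb (N : ℕ) (hN : 1 ≤ N) : (Nat.log 2 N : ℝ) ≤ Real.logb 2 N := by
  rw [Real.le_logb_iff_rpow_le (by norm_num) (by exact_mod_cast hN : (0:ℝ) < N)]
  rw [Real.rpow_natCast]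
  exact_mod_cast Nat.pow_log_le_self 2 (by omega)

lemma one_le_logb (N : ℕ) (hN : 2 ≤ N) : (1:ℝ) ≤ Real.logb 2 N := by
  rw [Real.le_logb_iff_rpow_le (by norm_num) (by positivity : (0:ℝ) < N)]
  rw [Real.rpow_one]
  exact_mod_cast hN

lemma clog_lt_logb_add_one (K : ℕ) (hK : 2 ≤ K) :
    ((Nat.clog 2 K : ℝ)) < Real.logb 2 K + 1 := by
  have h1 : 2 ^ (Nat.clog 2 K - 1) < K := Nat.pow_pred_clog_lt_self (by norm_num) (by omega)
  have h2 : ((Nat.clog 2 K - 1 : ℕ) : ℝ) < Real.logb 2 K := by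
    rw [Real.lt_logb_iff_rpow_lt (by norm_num) (by positivity : (0:ℝ) < K), Real.rpow_natCast]
    exact_mod_cast h1
  have h3 : 0 < Nat.clog 2 K := Nat.clog_pos (by norm_num) (by omega)
  have h4 : ((Nat.clog 2 K - 1 : ℕ) : ℝ) = (Nat.clog 2 K : ℝ) - 1 := by
    push_cast [Nat.cast_sub (by omega : 1 ≤ Nat.clog 2 K)]
    ring
  linarith [h2, h4.symm.le]

end Asymptotics


end AuxForStatement18

set_option maxHeartbeats 1000000 in
/-- let `t, K : ℕ → ℕ` with `K N ≥ 2` for all `N`, and suppose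
`t(N)·log₂(N)/N → 0` and `log₂(K(N))/N → 0` as `N → ∞`.  Then for all sufficiently large
`N` there exist nonzero nonnegative real coefficient vectors
`α^{(0)},…,α^{(K(N)−1)} ∈ ℝ^{S_{N,N}}` (supported on the simplex `S_{N,N}`) with pairwise
disjoint supports satisfying conditions (C1)–(C4) with parameter `t(N)`; consequently, for
every `K = o(2^N)` and `d = o(N / log N)` there exist families of `(N, K, N, d)`
permutation-invariant, Fock state, and spin codes. -/
theorem exists_asymptotic_code_families (t K : ℕ → ℕ) (hK : ∀ N, 2 ≤ K N)
    (ht : Filter.Tendsto (fun N : ℕ => (t N : ℝ) * Real.logb 2 N / N)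
      Filter.atTop (nhds 0))
    (hKlim : Filter.Tendsto (fun N : ℕ => Real.logb 2 (K N) / N)
      Filter.atTop (nhds 0)) :
    ∃ N₀ : ℕ, ∀ N, N₀ ≤ N →
      ∃ α : Fin (K N) → (Fin N → ℕ) → ℝ,
        (∀ i, ∃ n, α i n ≠ 0) ∧
        (∀ i, ∀ n, 0 ≤ α i n) ∧
        (∀ i, ∀ n, α i n ≠ 0 → ∑ x, n x = N) ∧
        (∀ i j, ∀ n, i ≠ j → α i n ≠ 0 → α j n = 0) ∧
        condR1 N (K N) N α ∧ condR2 N (K N) N α ∧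
        condR3 N (K N) N (t N) α ∧ condR4 N (K N) N (t N) α := by
  have h200 : (0:ℝ) < 1/200 := by norm_num
  obtain ⟨N₁, h1⟩ := Filter.eventually_atTop.1 (ht.eventually_lt_const h200)
  obtain ⟨N₂, h2⟩ := Filter.eventually_atTop.1 (hKlim.eventually_lt_const h200)
  refine ⟨max (max N₁ N₂) 2400, fun N hN => ?_⟩
  have hN1 : N₁ ≤ N := le_trans (le_trans (le_max_left _ _) (le_max_left _ _)) hN
  have hN2 : N₂ ≤ N := le_trans (le_trans (le_max_right _ _) (le_max_left _ _)) hN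
  have hN24 : 2400 ≤ N := le_trans (le_max_right _ _) hN
  have hNpos : (0:ℝ) < N := by positivity
  -- real consequences of the limit hypotheses
  have ht1 : (t N : ℝ) * Real.logb 2 N < N / 200 := by
    have := h1 N hN1
    rw [div_lt_iff₀ hNpos] at this
    linarith
  have hk1 : Real.logb 2 (K N) < N / 200 := by
    have := h2 N hN2
    rw [div_lt_iff₀ hNpos] at this
    linarith
  -- core nat parameters
  set κ := Nat.clog 2 (K N) with hκdef
  have hκ1 : 1 ≤ κ := Nat.clog_pos (by norm_num) (hK N)
  set X := t N + κ with hXdef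
  set L₀ := Nat.log 2 X + 3 with hL₀def
  set m := κ / L₀ + 1 with hmdef
  set L := L₀ + 1 with hLdef
  -- prime selection
  obtain ⟨p, hp, hp1, hp2⟩ := Nat.exists_prime_lt_and_le_two_mul (2^L₀) (by positivity)
  haveI : Fact p.Prime := ⟨hp⟩
  -- nat consequences of the real bounds
  have hlogN : 100 * (t N * (Nat.log 2 N + 1)) < N := by
    have ha : (t N : ℝ) * ((Nat.log 2 N : ℝ) + 1) ≤ 2 * ((t N : ℝ) * Real.logb 2 N) := by
      have hb1 := natlog_le_logb N (by omega)
      have hb2 := one_le_logb N (by omega)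
      have hpos : (0:ℝ) ≤ (t N : ℝ) := by positivity
      nlinarith
    have hb : (t N : ℝ) * ((Nat.log 2 N : ℝ) + 1) < N / 100 := by linarith
    have hc : ((t N * (Nat.log 2 N + 1) : ℕ) : ℝ) < N / 100 := by push_cast; linarith
    rw [lt_div_iff₀ (by norm_num : (0:ℝ) < 100)] at hc
    have hc' : ((100 * (t N * (Nat.log 2 N + 1)) : ℕ) : ℝ) < ((N:ℕ):ℝ) := by push_cast; linarith
    exact_mod_cast hc'
  have hκN : 200 * κ < N + 200 := by
    have ha := clog_lt_logb_add_one (K N) (hK N)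
    have hb : (κ : ℝ) < N / 200 + 1 := by rw [hκdef]; linarith
    have hc : (κ : ℝ) * 200 < N + 200 := by linarith
    have hc' : ((200 * κ : ℕ) : ℝ) < ((N + 200 : ℕ) : ℝ) := by push_cast; linarith
    exact_mod_cast hc'
  have htN : 100 * t N < N := by
    have : t N ≤ t N * (Nat.log 2 N + 1) := Nat.le_mul_of_pos_right _ (by omega)
    omega
  have hXN : X ≤ N := by omega
  have hlogX : Nat.log 2 X ≤ Nat.log 2 N := Nat.log_mono_right hXN
  have hlog200 : 200 * Nat.log 2 N ≤ N := two_hundred_mul_log_le N hN24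
  -- prime bounds
  have hXp : 4 * X < 2^L₀ := by
    have h1' : X < 2 * 2^(Nat.log 2 X) := by
      have := Nat.lt_pow_succ_log_self (by norm_num : 1 < 2) X
      rw [pow_succ] at this
      omega
    have h2' : 2^L₀ = 2^(Nat.log 2 X) * 8 := by
      rw [hL₀def, pow_add]
      norm_num
    omega
  have hns : 2*(t N)+2+m ≤ p := by
    have hm1 : m ≤ κ + 1 := by
      rw [hmdef]
      have : κ / L₀ ≤ κ := Nat.div_le_self _ _
      omega
    have : 2*(t N)+2+m ≤ 4*X := by omega
    omega
  have hpL : p ≤ 2^L := by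
    rw [hLdef, pow_succ]
    omega
  have hKp : K N ≤ p^m := by
    have h1' : K N ≤ 2^κ := Nat.le_pow_clog (by norm_num) _
    have h2' : κ ≤ L₀ * m := by
      have hd := Nat.div_add_mod κ L₀
      have hmod : κ % L₀ < L₀ := Nat.mod_lt _ (by omega)
      have : L₀ * m = L₀ * (κ / L₀) + L₀ := by rw [hmdef]; ring
      omega
    calc K N ≤ 2^κ := h1'
      _ ≤ 2^(L₀ * m) := Nat.pow_le_pow_right (by norm_num) h2'
      _ = (2^L₀)^m := by rw [pow_mul]
      _ ≤ p^m := Nat.pow_le_pow_left (le_of_lt hp1) m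
  -- the size bound
  have hgN : 2*((2*(t N)+2+m)*L) < N := by
    have hb2 : m * L ≤ 2*κ + L₀ + 1 := by
      have hd1 : (κ / L₀) * L₀ ≤ κ := Nat.div_mul_le_self _ _
      have : m * L = (κ / L₀) * L₀ + (κ / L₀) + L₀ + 1 := by rw [hmdef, hLdef]; ring
      have hd2 : κ / L₀ ≤ κ := Nat.div_le_self _ _
      omega
    have hL4 : L ≤ Nat.log 2 N + 4 := by omega
    have hb1 : (2*(t N)+2) * L ≤ (2*(t N)+2) * (Nat.log 2 N + 4) :=
      Nat.mul_le_mul_left _ hL4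
    have hb3 : (2*(t N)+2) * (Nat.log 2 N + 4)
        = 2 * (t N * (Nat.log 2 N + 1)) + 6 * t N + 2 * Nat.log 2 N + 8 := by ring
    have hb4 : (2*(t N)+2+m)*L = (2*(t N)+2)*L + m*L := by ring
    omega
  exact construction N (t N) m L (K N) (by omega) hns hpL hKp hgN
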